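/- Maximally Hellinger-distanced distribution: for a strictly positive probability mass function φ on a finite set S, the maximum over probability mass functions ψ of the Hellinger distance M(φ,ψ) is achieved by the point mass at an argmin of φ, and the maximal distance equals (1 - √(min_t φ(t)))^{1/2}, which is strictly less than 1. -/
import Mathlib


open Finset in
/-- For a strictly positive pmf `φ` on a nonempty finite set, the Hellinger
distance to any pmf is at most that to the point mass at an argmin of `φ`,
which equals `(1 - √(min φ))^{1/2} < 1`. -/
theorem max_hellinger_distanced_distribution
    (S : Type*) [Fintype S] [Nonempty S] [DecidableEq S]
    (φ : S → ℝ) (hφ : ∀ x, 0 < φ x) (hφ1 : ∑ x, φ x = 1)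
    (t₀ : S) (ht₀ : ∀ t, φ t₀ ≤ φ t) :
    (Real.sqrt ((1/2) * ∑ x, (Real.sqrt (φ x) -
        Real.sqrt (if x = t₀ then (1:ℝ) else 0))^2) =
      Real.sqrt (1 - Real.sqrt (φ t₀))) ∧
    (∀ ψ : S → ℝ, (∀ x, 0 ≤ ψ x) → ∑ x, ψ x = 1 →
      Real.sqrt ((1/2) * ∑ x, (Real.sqrt (φ x) - Real.sqrt (ψ x))^2) ≤
        Real.sqrt (1 - Real.sqrt (φ t₀))) ∧
    Real.sqrt (1 - Real.sqrt (φ t₀)) < 1 := by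
  have key : ∀ ψ : S → ℝ, (∀ x, 0 ≤ ψ x) → ∑ x, ψ x = 1 →
      (1/2) * ∑ x, (Real.sqrt (φ x) - Real.sqrt (ψ x))^2
        = 1 - ∑ x, Real.sqrt (φ x) * Real.sqrt (ψ x) := by
    intro ψ hψ hψ1
    have h1 : ∀ x : S, (Real.sqrt (φ x) - Real.sqrt (ψ x))^2
        = φ x + ψ x - 2 * (Real.sqrt (φ x) * Real.sqrt (ψ x)) := by
      intro x
      rw [sub_sq, Real.sq_sqrt (hφ x).le, Real.sq_sqrt (hψ x)]
      ring
    simp_rw [h1]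
    rw [Finset.sum_sub_distrib, Finset.sum_add_distrib, hφ1, hψ1, ← Finset.mul_sum]
    ring
  have hδpos : ∀ x : S, (0:ℝ) ≤ if x = t₀ then (1:ℝ) else 0 := by
    intro x; split <;> norm_num
  have hδ1 : ∑ x : S, (if x = t₀ then (1:ℝ) else 0) = 1 := by
    simp
  have hsum : ∑ x : S, Real.sqrt (φ x) * Real.sqrt (if x = t₀ then (1:ℝ) else 0)
      = Real.sqrt (φ t₀) := by
    have : ∀ x : S, Real.sqrt (φ x) * Real.sqrt (if x = t₀ then (1:ℝ) else 0)
        = if x = t₀ then Real.sqrt (φ x) else 0 := by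
      intro x; split <;> simp
    simp_rw [this]
    simp
  have hφt1 : φ t₀ ≤ 1 := by
    calc φ t₀ ≤ ∑ x, φ x := Finset.single_le_sum (fun x _ => (hφ x).le) (Finset.mem_univ t₀)
    _ = 1 := hφ1
  have hsqle1 : Real.sqrt (φ t₀) ≤ 1 := by
    rw [show (1:ℝ) = Real.sqrt 1 by simp]
    exact Real.sqrt_le_sqrt hφt1
  refine ⟨?_, ?_, ?_⟩
  · rw [key _ hδpos hδ1, hsum]
  · intro ψ hψ hψ1
    rw [key _ hψ hψ1]
    apply Real.sqrt_le_sqrt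
    have hge : Real.sqrt (φ t₀) ≤ ∑ x, Real.sqrt (φ x) * Real.sqrt (ψ x) := by
      have h2 : ∀ x : S, Real.sqrt (φ t₀) * Real.sqrt (ψ x)
          ≤ Real.sqrt (φ x) * Real.sqrt (ψ x) := fun x =>
        mul_le_mul_of_nonneg_right (Real.sqrt_le_sqrt (ht₀ x)) (Real.sqrt_nonneg _)
    -- ∑ √ψ ≥ 1
      have h3 : (1:ℝ) ≤ ∑ x, Real.sqrt (ψ x) := by
        rw [← hψ1]
        apply Finset.sum_le_sum
        intro x _
        have hx1 : ψ x ≤ 1 := by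
          calc ψ x ≤ ∑ y, ψ y := Finset.single_le_sum (fun y _ => hψ y) (Finset.mem_univ x)
          _ = 1 := hψ1
        nlinarith [Real.sq_sqrt (hψ x), Real.sqrt_nonneg (ψ x)]
      calc Real.sqrt (φ t₀) = Real.sqrt (φ t₀) * 1 := by ring
      _ ≤ Real.sqrt (φ t₀) * ∑ x, Real.sqrt (ψ x) :=
          mul_le_mul_of_nonneg_left h3 (Real.sqrt_nonneg _)
      _ = ∑ x, Real.sqrt (φ t₀) * Real.sqrt (ψ x) := (Finset.mul_sum _ _ _)
      _ ≤ _ := Finset.sum_le_sum (fun x _ => h2 x)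
    linarith
  · have : Real.sqrt (1 - Real.sqrt (φ t₀)) < Real.sqrt 1 := by
      apply Real.sqrt_lt_sqrt (by linarith)
      have : 0 < Real.sqrt (φ t₀) := Real.sqrt_pos.mpr (hφ t₀)
      linarith
    simpa using this
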